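/- Let s ∈ ℂ with s ≠ 0 and let f = x·y⁴ + s·x²y² + y ∈ ℂ[x,y] (the polynomial xy⁴ + s(xy)² + y of the paper's Example 8.3). Then the total Milnor number of f equals 5, i.e. dim_ℂ ℂ[x,y]/(y⁴ + 2s·xy², 4xy³ + 2s·x²y + 1) = 5. -/

import Mathlib

/-!
Writing `2s = a`, the critical equations are `y²(y² + a x) = 0` and
`y(4xy² + a x²) + 1 = 0`. The second makes `y` invertible modulo the Jacobian ideal, so the
first becomes `x = -y²/a`, and substituting this into the second leaves `y⁵ = a/3`.
Hence `ℂ[x,y]/J(f) ≅ ℂ[y]/(y⁵ - 2s/3)`, which has dimension 5.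
-/

open MvPolynomial

noncomputable section

/-- The polynomial f = xy⁴ + s·(xy)² + y of Example 8.3
    (variables: X 0 = x, X 1 = y). -/
def f₈₃ (s : ℂ) : MvPolynomial (Fin 2) ℂ :=
  X 0 * X 1 ^ 4 + C s * (X 0 ^ 2 * X 1 ^ 2) + X 1

universe u in
theorem Ideal.span_pair_eq_of_forall_ringHom {R : Type u} [CommRing R] {a b c d : R}
    (h : ∀ (A : Type u) [CommRing A] (φ : R →+* A),
      φ a = 0 ∧ φ b = 0 ↔ φ c = 0 ∧ φ d = 0) :
    Ideal.span {a, b} = Ideal.span {c, d} := by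
  have key (I : Ideal R) : a ∈ I ∧ b ∈ I ↔ c ∈ I ∧ d ∈ I := by
    simpa only [Ideal.Quotient.eq_zero_iff_mem] using h _ (Ideal.Quotient.mk I)
  apply le_antisymm <;>
    simp only [Ideal.span_le, Set.insert_subset_iff, Set.singleton_subset_iff, SetLike.mem_coe]
  · exact (key _).2 ⟨Ideal.subset_span (by simp), Ideal.subset_span (by simp)⟩
  · exact (key _).1 ⟨Ideal.subset_span (by simp), Ideal.subset_span (by simp)⟩

namespace MvPolynomial

variable {R : Type*} [CommRing R]

theorem aeval_polynomial_aeval_X {σ S : Type*} [CommRing S] [Algebra R S] (v : σ → S) (i : σ)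
    (r : Polynomial R) :
    aeval v (Polynomial.aeval (X i : MvPolynomial σ R) r) = Polynomial.aeval (v i) r := by
  rw [← Polynomial.aeval_algHom_apply, aeval_X]

variable (p q : Polynomial R)

def graphIdeal : Ideal (MvPolynomial (Fin 2) R) :=
  Ideal.span {X 0 - Polynomial.aeval (X 1) p, Polynomial.aeval (X 1) q}

namespace graphIdeal

def toAdjoinRoot : (MvPolynomial (Fin 2) R ⧸ graphIdeal p q) →ₐ[R] AdjoinRoot q :=
  Ideal.Quotient.liftₐ _ (aeval ![AdjoinRoot.mk q p, AdjoinRoot.root q]) fun a ha => by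
    refine (Ideal.span_le (I := RingHom.ker (aeval _))).2 ?_ ha
    simp [Set.insert_subset_iff, aeval_polynomial_aeval_X, AdjoinRoot.aeval_eq]

@[simp]
theorem toAdjoinRoot_mk (a : MvPolynomial (Fin 2) R) :
    toAdjoinRoot p q (Ideal.Quotient.mk _ a) = aeval ![AdjoinRoot.mk q p, AdjoinRoot.root q] a :=
  rfl

def ofAdjoinRoot : AdjoinRoot q →ₐ[R] (MvPolynomial (Fin 2) R ⧸ graphIdeal p q) :=
  AdjoinRoot.liftAlgHom q (Algebra.ofId R _) (Ideal.Quotient.mkₐ R _ (X 1)) <| by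
    change Polynomial.aeval _ q = 0
    rw [Polynomial.aeval_algHom_apply, Ideal.Quotient.mkₐ_eq_mk, Ideal.Quotient.eq_zero_iff_mem]
    exact Ideal.subset_span (by simp)

@[simp]
theorem ofAdjoinRoot_root :
    ofAdjoinRoot p q (AdjoinRoot.root q) = Ideal.Quotient.mkₐ R _ (X 1) :=
  AdjoinRoot.liftAlgHom_root ..

def quotientEquivAdjoinRoot :
    (MvPolynomial (Fin 2) R ⧸ graphIdeal p q) ≃ₐ[R] AdjoinRoot q := by
  refine AlgEquiv.ofAlgHom (toAdjoinRoot p q) (ofAdjoinRoot p q) ?_ ?_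
  · ext
    simp
  · refine Ideal.Quotient.algHom_ext R (algHom_ext (Fin.forall_fin_two.2 ⟨?_, ?_⟩))
    · simp only [AlgHom.comp_apply, Ideal.Quotient.mkₐ_eq_mk, toAdjoinRoot_mk, aeval_X,
        Matrix.cons_val_zero, AlgHom.id_apply]
      rw [← AdjoinRoot.aeval_eq, ← Polynomial.aeval_algHom_apply, ofAdjoinRoot_root,
        Polynomial.aeval_algHom_apply, eq_comm, Ideal.Quotient.mkₐ_eq_mk,
        Ideal.Quotient.mk_eq_mk_iff_sub_mem]
      exact Ideal.subset_span (by simp)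
    · simp

theorem finrank_quotient {K : Type*} [Field K] (p q : Polynomial K) :
    Module.finrank K (MvPolynomial (Fin 2) K ⧸ graphIdeal p q) = q.natDegree :=
  (quotientEquivAdjoinRoot p q).toLinearEquiv.finrank_eq.trans finrank_quotient_span_eq_natDegree

end graphIdeal

end MvPolynomial

theorem pderiv_zero_f₈₃ (s : ℂ) : pderiv 0 (f₈₃ s) = X 1 ^ 4 + 2 * C s * X 0 * X 1 ^ 2 := by
  simp [f₈₃, pderiv_X]
  ring

theorem pderiv_one_f₈₃ (s : ℂ) :
    pderiv 1 (f₈₃ s) = 4 * X 0 * X 1 ^ 3 + 2 * C s * X 0 ^ 2 * X 1 + 1 := by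
  simp [f₈₃, pderiv_X]
  ring

theorem critical_equations_f₈₃_iff {A : Type*} [CommRing A] {a b c x y : A} (hab : a * b = 1)
    (hc : 3 * c = a) :
    y ^ 4 + a * x * y ^ 2 = 0 ∧ 4 * x * y ^ 3 + a * x ^ 2 * y + 1 = 0 ↔
      x + b * y ^ 2 = 0 ∧ y ^ 5 - c = 0 := by
  constructor
  · rintro ⟨h₀, h₁⟩
    have hy : IsUnit (y ^ 2) :=
      (IsUnit.of_mul_eq_one (-(4 * x * y ^ 2 + a * x ^ 2)) (by linear_combination -h₁)).pow 2
    have hx : y ^ 2 + a * x = 0 := hy.mul_right_eq_zero.1 (by linear_combination h₀)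
    refine ⟨by linear_combination b * hx - x * hab, ?_⟩
    linear_combination c * b * (-a * h₁ + (a * x * y + 3 * y ^ 3) * hx) - (y ^ 5 - c) * hab -
      y ^ 5 * b * hc
  · rintro ⟨h₀, h₁⟩
    constructor
    · linear_combination a * y ^ 2 * h₀ - y ^ 4 * hab
    · linear_combination (4 * y ^ 3 + a * y * (x - b * y ^ 2)) * h₀ - 3 * b * h₁ +
        (b * y ^ 5 - 1) * hab - b * hc

theorem span_pderiv_f₈₃ {s : ℂ} (hs : s ≠ 0) :
    Ideal.span {pderiv 0 (f₈₃ s), pderiv 1 (f₈₃ s)} =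
      graphIdeal (-(Polynomial.C (2 * s)⁻¹ * Polynomial.X ^ 2))
        (Polynomial.X ^ 5 - Polynomial.C (2 * s / 3)) := by
  have hab : 2 * C s * C (2 * s)⁻¹ = (1 : MvPolynomial (Fin 2) ℂ) := by
    rw [← map_ofNat C 2, ← C_mul, ← C_mul, mul_inv_cancel₀ (by simpa using hs), C_1]
  have hc : 3 * C (2 * s / 3) = (2 * C s : MvPolynomial (Fin 2) ℂ) := by
    rw [← map_ofNat C 3, ← map_ofNat C 2, ← C_mul, ← C_mul, mul_div_cancel₀ _ three_ne_zero]
  rw [pderiv_zero_f₈₃, pderiv_one_f₈₃, graphIdeal]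
  simp only [map_neg, map_sub, map_mul, map_pow, Polynomial.aeval_X, Polynomial.aeval_C,
    algebraMap_eq]
  refine Ideal.span_pair_eq_of_forall_ringHom fun A _ φ => ?_
  simp only [map_add, map_sub, map_mul, map_pow, map_one, map_ofNat, sub_neg_eq_add]
  exact critical_equations_f₈₃_iff
    (by simpa only [map_mul, map_ofNat, map_one] using congr(φ $hab))
    (by simpa only [map_mul, map_ofNat] using congr(φ $hc))

/-- for s ≠ 0, the total Milnor number of f = xy⁴ + s(xy)² + y equals 5,
    i.e. dim_ℂ ℂ[x,y]/(∂f/∂x, ∂f/∂y) = 5. -/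
theorem total_milnor_number_example83 (s : ℂ) (hs : s ≠ 0) :
    Module.finrank ℂ
      (MvPolynomial (Fin 2) ℂ ⧸
        Ideal.span {pderiv 0 (f₈₃ s), pderiv 1 (f₈₃ s)}) = 5 := by
  rw [span_pderiv_f₈₃ hs, graphIdeal.finrank_quotient, Polynomial.natDegree_X_pow_sub_C]
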